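/- In a finite acyclic MDP, let s' be a non-terminal state, let a ∈ A(s'), and let π be the single-deviation policy with π(s) = π^A(s) for every state s ≠ s' and π(s') = a. Define the bonus function R^B by R^B(s',a) = V_{s'}(π^A, R^A) − Q^{π^A}(s', a, R^A) and R^B = 0 on every other state-action pair. Then V_s(π, R^A + R^B) = V_s(π^A, R^A) for every state s, and π is everywhere-optimal for R^A + R^B. -/

import Mathlib

/-!
Values are computed by backward induction along the acyclic rank, so a function that satisfies
the Bellman equation of a policy is its value, and a function that dominates its Bellman
backup dominates its value. The bonus is exactly the advantage gap `V - Q` of the deviation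
at `(s', a)`, so the deviation earns `V^{π^A}` everywhere, and `V^{π^A}` dominates the
Bellman backup of every policy under `R^A + R^B`, since `Q ≤ V` for the optimal `π^A`.
-/

open Finset

namespace AcyclicMDP

variable {S A : Type} [Fintype S]

/-- With `W = V π R` this is the paper's `Q^π(s, b, R)`. -/
def qValue (P : S → A → S → ℝ) (R : S → A → ℝ) (W : S → ℝ) (s : S) (b : A) : ℝ :=
  R s b + ∑ t, P s b t * W t

def IsPolicy (act : S → Finset A) (π : S → A) : Prop :=
  ∀ s, act s ≠ ∅ → π s ∈ act s

variable {act : S → Finset A} {P : S → A → S → ℝ} {rank : S → ℕ}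

theorem qValue_le_qValue_of_rank_lt (hP0 : ∀ s b t, 0 ≤ P s b t)
    (hacyc : ∀ s, ∀ b ∈ act s, ∀ t, 0 < P s b t → rank t < rank s)
    (R : S → A → ℝ) {W W' : S → ℝ} {s : S} {b : A} (hb : b ∈ act s)
    (h : ∀ t, rank t < rank s → W t ≤ W' t) :
    qValue P R W s b ≤ qValue P R W' s b := by
  refine add_le_add_right (sum_le_sum fun t _ => ?_) _
  rcases (hP0 s b t).eq_or_lt with h0 | hpos
  · simp [← h0]
  · exact mul_le_mul_of_nonneg_left (h t (hacyc s b hb t hpos)) hpos.le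

theorem qValue_congr_of_rank_lt (hP0 : ∀ s b t, 0 ≤ P s b t)
    (hacyc : ∀ s, ∀ b ∈ act s, ∀ t, 0 < P s b t → rank t < rank s)
    (R : S → A → ℝ) {W W' : S → ℝ} {s : S} {b : A} (hb : b ∈ act s)
    (h : ∀ t, rank t < rank s → W t = W' t) :
    qValue P R W s b = qValue P R W' s b :=
  le_antisymm (qValue_le_qValue_of_rank_lt hP0 hacyc R hb fun t ht => (h t ht).le)
    (qValue_le_qValue_of_rank_lt hP0 hacyc R hb fun t ht => (h t ht).ge)

variable {V : (S → A) → (S → A → ℝ) → S → ℝ}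

section Values

variable (hP0 : ∀ s b t, 0 ≤ P s b t)
  (hacyc : ∀ s, ∀ b ∈ act s, ∀ t, 0 < P s b t → rank t < rank s)
  (hVterm : ∀ (π : S → A) (R : S → A → ℝ) (s : S), act s = ∅ → V π R s = 0)
  (hVrec : ∀ (π : S → A) (R : S → A → ℝ) (s : S), act s ≠ ∅ →
    V π R s = qValue P R (V π R) s (π s))
include hP0 hacyc hVterm hVrec

theorem value_le_of_qValue_le {π : S → A} (hπ : IsPolicy act π) {R : S → A → ℝ} {W : S → ℝ}
    (hterm : ∀ s, act s = ∅ → 0 ≤ W s)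
    (hstep : ∀ s, act s ≠ ∅ → qValue P R W s (π s) ≤ W s) (s : S) :
    V π R s ≤ W s := by
  induction h : rank s using Nat.strong_induction_on generalizing s with
  | _ n ih =>
    by_cases hs : act s = ∅
    · exact (hVterm π R s hs).trans_le (hterm s hs)
    · rw [hVrec π R s hs]
      refine (qValue_le_qValue_of_rank_lt hP0 hacyc R (hπ s hs) fun t ht => ?_).trans (hstep s hs)
      exact ih _ (h ▸ ht) t rfl

theorem value_eq_of_qValue_eq {π : S → A} (hπ : IsPolicy act π) {R : S → A → ℝ} {W : S → ℝ}
    (hterm : ∀ s, act s = ∅ → W s = 0)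
    (hstep : ∀ s, act s ≠ ∅ → qValue P R W s (π s) = W s) (s : S) :
    V π R s = W s := by
  induction h : rank s using Nat.strong_induction_on generalizing s with
  | _ n ih =>
    by_cases hs : act s = ∅
    · rw [hVterm π R s hs, hterm s hs]
    · rw [hVrec π R s hs, ← hstep s hs]
      exact qValue_congr_of_rank_lt hP0 hacyc R (hπ s hs) fun t ht => ih _ (h ▸ ht) t rfl

theorem value_congr_of_eq_of_rank_lt {π₁ π₂ : S → A} (hπ₂ : IsPolicy act π₂) (R : S → A → ℝ)
    (n : ℕ) (h : ∀ t, rank t < n → π₁ t = π₂ t) {s : S} (hs : rank s < n) :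
    V π₁ R s = V π₂ R s := by
  induction hr : rank s using Nat.strong_induction_on generalizing s with
  | _ m ih =>
    by_cases hterm : act s = ∅
    · rw [hVterm _ _ _ hterm, hVterm _ _ _ hterm]
    · rw [hVrec _ _ _ hterm, hVrec _ _ _ hterm, h s hs]
      exact qValue_congr_of_rank_lt hP0 hacyc R (hπ₂ s hterm) fun t ht =>
        ih _ (hr ▸ ht) (ht.trans hs) rfl

theorem value_update_eq_qValue [DecidableEq S] {π : S → A} (hπ : IsPolicy act π)
    (R : S → A → ℝ) {s : S} (hs : act s ≠ ∅) (b : A) (hb : b ∈ act s) :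
    V (Function.update π s b) R s = qValue P R (V π R) s b := by
  rw [hVrec _ _ _ hs, Function.update_self]
  refine qValue_congr_of_rank_lt hP0 hacyc R hb fun t ht => ?_
  refine value_congr_of_eq_of_rank_lt hP0 hacyc hVterm hVrec hπ R (rank s)
    (fun u hu => Function.update_of_ne ?_ _ _) ht
  rintro rfl
  exact hu.false

theorem qValue_le_value_of_optimal [DecidableEq S] {π : S → A} (hπ : IsPolicy act π)
    {R : S → A → ℝ} (hopt : ∀ π', IsPolicy act π' → ∀ s, V π' R s ≤ V π R s)
    {s : S} (hs : act s ≠ ∅) {b : A} (hb : b ∈ act s) :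
    qValue P R (V π R) s b ≤ V π R s := by
  have hupd : IsPolicy act (Function.update π s b) := by
    intro u hu
    rcases eq_or_ne u s with rfl | hne
    · simpa using hb
    · simpa [Function.update_of_ne hne] using hπ u hu
  rw [← value_update_eq_qValue hP0 hacyc hVterm hVrec hπ R hs b hb]
  exact hopt _ hupd s

end Values

end AcyclicMDP

open AcyclicMDP in
theorem stmt_4_general {S A : Type} [Fintype S] [DecidableEq S] [DecidableEq A]
    (act : S → Finset A)
    (P : S → A → S → ℝ)
    (hP0 : ∀ s a t, 0 ≤ P s a t)
    (rank : S → ℕ)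
    (hacyc : ∀ s, ∀ a ∈ act s, ∀ t, 0 < P s a t → rank t < rank s)
    (V : (S → A) → (S → A → ℝ) → S → ℝ)
    (hVterm : ∀ (π : S → A) (R : S → A → ℝ) (s : S), act s = ∅ → V π R s = 0)
    (hVrec : ∀ (π : S → A) (R : S → A → ℝ) (s : S), act s ≠ ∅ →
      V π R s = R s (π s) + ∑ t, P s (π s) t * V π R t)
    (RA : S → A → ℝ)
    (πA : S → A) (hπA : ∀ s, act s ≠ ∅ → πA s ∈ act s)
    (hπAopt : ∀ π : S → A, (∀ s, act s ≠ ∅ → π s ∈ act s) → ∀ s, V π RA s ≤ V πA RA s)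
    (s' : S) (a : A) (ha : a ∈ act s')
    (π : S → A) (hπdef : ∀ s, π s = if s = s' then a else πA s)
    (RB : S → A → ℝ)
    (hRB : ∀ s b, RB s b =
      if s = s' ∧ b = a then
        V πA RA s' - (RA s' a + ∑ t, P s' a t * V πA RA t)
      else 0) :
    (∀ s, V π (fun s b => RA s b + RB s b) s = V πA RA s) ∧
    (∀ π' : S → A, (∀ s, act s ≠ ∅ → π' s ∈ act s) → ∀ s,
      V π' (fun s b => RA s b + RB s b) s ≤ V π (fun s b => RA s b + RB s b) s) := by
  set R : S → A → ℝ := fun s b => RA s b + RB s b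
  have hπ : IsPolicy act π := fun s hs => by
    rw [hπdef]; split_ifs with h
    · exact h ▸ ha
    · exact hπA s hs
  have hqR : ∀ s b, qValue P R (V πA RA) s b =
      if s = s' ∧ b = a then V πA RA s else qValue P RA (V πA RA) s b := by
    intro s b
    simp only [qValue, R, hRB]
    split_ifs with h
    · obtain ⟨rfl, rfl⟩ := h; ring
    · rw [add_zero]
  have hvalue : ∀ s, V π R s = V πA RA s :=
    value_eq_of_qValue_eq hP0 hacyc hVterm hVrec hπ (hVterm πA RA) fun s hs => by
      rw [hqR, hVrec πA RA s hs, hπdef]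
      by_cases h : s = s' <;> simp [h, qValue]
  refine ⟨hvalue, fun π' hπ' s => (hvalue s).symm ▸ ?_⟩
  refine value_le_of_qValue_le hP0 hacyc hVterm hVrec hπ' (fun s hs => (hVterm πA RA s hs).ge)
    (fun s hs => ?_) s
  rw [hqR]
  split_ifs
  · exact le_rfl
  · exact qValue_le_value_of_optimal hP0 hacyc hVterm hVrec hπA hπAopt hs (hπ' s hs)

/-- in a finite acyclic MDP, the single-deviation policy with its
advantage-based bonus yields the agent his no-bonus optimal values everywhere, and the
deviation policy is everywhere-optimal for `R^A + R^B`. -/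
theorem stmt_4 {S A : Type} [Fintype S] [Fintype A] [DecidableEq S] [DecidableEq A]
    (act : S → Finset A)
    (P : S → A → S → ℝ)
    (hP0 : ∀ s a t, 0 ≤ P s a t)
    (hP1 : ∀ s, ∀ a ∈ act s, ∑ t, P s a t = 1)
    (rank : S → ℕ)
    (hacyc : ∀ s, ∀ a ∈ act s, ∀ t, 0 < P s a t → rank t < rank s)
    (V : (S → A) → (S → A → ℝ) → S → ℝ)
    (hVterm : ∀ (π : S → A) (R : S → A → ℝ) (s : S), act s = ∅ → V π R s = 0)
    (hVrec : ∀ (π : S → A) (R : S → A → ℝ) (s : S), act s ≠ ∅ →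
      V π R s = R s (π s) + ∑ t, P s (π s) t * V π R t)
    (RA : S → A → ℝ)
    (πA : S → A) (hπA : ∀ s, act s ≠ ∅ → πA s ∈ act s)
    (hπAopt : ∀ π : S → A, (∀ s, act s ≠ ∅ → π s ∈ act s) → ∀ s, V π RA s ≤ V πA RA s)
    (s' : S) (hs' : act s' ≠ ∅) (a : A) (ha : a ∈ act s')
    (π : S → A) (hπdef : ∀ s, π s = if s = s' then a else πA s)
    (RB : S → A → ℝ)
    (hRB : ∀ s b, RB s b =
      if s = s' ∧ b = a then
        V πA RA s' - (RA s' a + ∑ t, P s' a t * V πA RA t)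
      else 0) :
    (∀ s, V π (fun s b => RA s b + RB s b) s = V πA RA s) ∧
    (∀ π' : S → A, (∀ s, act s ≠ ∅ → π' s ∈ act s) → ∀ s,
      V π' (fun s b => RA s b + RB s b) s ≤ V π (fun s b => RA s b + RB s b) s) :=
  stmt_4_general act P hP0 rank hacyc V hVterm hVrec RA πA hπA hπAopt s' a ha π hπdef RB hRB
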